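/- arXiv:2212.09484 — 2 statements merged into one kernel-verified Lean document; each statement's English description precedes it below -/
import Mathlib

section
/- Let G be a finite group with maximal subgroups M_1, ..., M_t. Then h(G) = 2·( Σ_r h(M_r) − Σ_{r1<r2} h(M_{r1} ∩ M_{r2}) + ... + (−1)^{t−1} h(M_1 ∩ ... ∩ M_t) ), i.e., h(G) = 2·Σ_{∅≠S⊆{1,...,t}} (−1)^{|S|+1} h(⋂_{r∈S} M_r), provided G is nontrivial. -/
/-- The number of nonempty chains of subgroups of `G` (under strict inclusion,
i.e. finite sets of subgroups that are totally ordered) whose largest element is `G` itself. -/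
noncomputable def numChains (G : Type*) [Group G] : ℕ :=
  Nat.card {C : Finset (Subgroup G) //
    IsChain (· ≤ ·) (C : Set (Subgroup G)) ∧ (⊤ : Subgroup G) ∈ C}

/-! For a subgroup `K`, adding or removing `K` pairs the chains of subgroups of `K` that
contain `K` with those that do not, so there are `2 h(K)` chains (the empty one included)
of subgroups of `K`. A chain of subgroups of `G` avoiding `G` has a proper join (`⊥` for the
empty chain, as `G ≠ 1`), hence lies in some maximal subgroup, and it lies in all `M r` with
`r ∈ S` iff it lies in their intersection. Inclusion–exclusion over the `M r` therefore
counts the `h(G)` chains avoiding `G` as `∑ ± 2 h(⋂ M r)`. -/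

open Finset

lemma IsChain.finset_sup_id_mem {α : Type*} [SemilatticeSup α] [OrderBot α] {C : Finset α}
    (hC : IsChain (· ≤ ·) (C : Set α)) (hne : C.Nonempty) : C.sup id ∈ C := by
  rw [← sup'_eq_sup hne]
  refine sup'_mem _ (fun x hx y hy => ?_) _ _ _ fun i hi => hi
  rcases hC.total hx hy with h | h
  · rwa [sup_of_le_right h]
  · rwa [sup_of_le_left h]

section Chains

open scoped Classical

variable {α : Type*} [Fintype α]

section Preorder

variable [Preorder α]

noncomputable def chainsBelow (a : α) : Finset (Finset α) :=
  univ.filter fun C => IsChain (· ≤ ·) (C : Set α) ∧ ∀ x ∈ C, x ≤ a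

noncomputable def chainsWithMax (a : α) : Finset (Finset α) :=
  (chainsBelow a).filter (a ∈ ·)

lemma mem_chainsBelow {a : α} {C : Finset α} :
    C ∈ chainsBelow a ↔ IsChain (· ≤ ·) (C : Set α) ∧ ∀ x ∈ C, x ≤ a := by
  simp [chainsBelow]

lemma mem_chainsWithMax {a : α} {C : Finset α} :
    C ∈ chainsWithMax a ↔ IsChain (· ≤ ·) (C : Set α) ∧ (∀ x ∈ C, x ≤ a) ∧ a ∈ C := by
  rw [chainsWithMax, mem_filter, mem_chainsBelow, and_assoc]

lemma card_chainsBelow_filter_notMem (a : α) :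
    #((chainsBelow a).filter (a ∉ ·)) = #(chainsWithMax a) := by
  refine card_nbij' (insert a) (erase · a) (fun C hC => ?_) (fun C hC => ?_)
    (fun C hC => erase_insert (mem_filter.1 hC).2) (fun C hC => insert_erase ?_)
  · obtain ⟨⟨hch, hle⟩, haC⟩ := mem_filter.1 hC |>.imp_left mem_chainsBelow.1
    refine mem_chainsWithMax.2
      ⟨?_, forall_mem_insert _ _ _ |>.2 ⟨le_rfl, hle⟩, mem_insert_self a C⟩
    rw [coe_insert]
    exact hch.insert fun b hb _ => Or.inr (hle b hb)
  · obtain ⟨hch, hle, -⟩ := mem_chainsWithMax.1 hC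
    exact mem_filter.2 ⟨mem_chainsBelow.2 ⟨hch.mono (coe_subset.2 (erase_subset a C)),
      fun x hx => hle x (mem_of_mem_erase hx)⟩, notMem_erase a C⟩
  · exact (mem_chainsWithMax.1 hC).2.2

lemma card_chainsBelow (a : α) : #(chainsBelow a) = 2 * #(chainsWithMax a) := by
  rw [← card_filter_add_card_filter_not (a ∈ ·), card_chainsBelow_filter_notMem,
    two_mul]
  rfl

lemma card_chainsWithMax_map {β : Type*} [Preorder β] [Fintype β] (f : α ↪o β) (a : α)
    (hf : ∀ b ≤ f a, b ∈ Set.range f) : #(chainsWithMax (f a)) = #(chainsWithMax a) := by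
  symm
  refine card_nbij (map f.toEmbedding) (fun C hC => ?_)
    (fun C _ D _ h => map_injective _ h) (fun D hD => ?_)
  · obtain ⟨hch, hle, ha⟩ := mem_chainsWithMax.1 hC
    refine mem_chainsWithMax.2 ⟨?_, ?_, mem_map_of_mem _ ha⟩
    · rw [coe_map]
      exact hch.image f
    · simpa using hle
  · obtain ⟨hch, hle, ha⟩ := mem_chainsWithMax.1 hD
    obtain ⟨C, -, rfl⟩ : ∃ C ⊆ univ, D = C.map f.toEmbedding :=
      subset_map_iff.1 fun x hx => by simpa using hf x (hle x hx)
    refine ⟨C, mem_chainsWithMax.2 ⟨?_, ?_, ?_⟩, rfl⟩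
    · rw [coe_map] at hch
      simpa [Set.preimage_image_eq _ f.injective] using hch.preimage_relEmbedding f
    · simpa using hle
    · simpa using ha

end Preorder

section Lattice

variable [Lattice α] [BoundedOrder α]

lemma biUnion_chainsBelow_eq_filter_notMem_top [Nontrivial α] {ι : Type*} [Fintype ι]
    (M : ι → α) (hM : ∀ a, a ∈ Set.range M ↔ IsCoatom a) :
    univ.biUnion (fun i => chainsBelow (M i)) = (chainsBelow ⊤).filter (⊤ ∉ ·) := by
  ext C
  simp only [mem_biUnion, mem_univ, true_and, mem_filter, mem_chainsBelow, le_top,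
    implies_true, and_true]
  constructor
  · rintro ⟨i, hch, hle⟩
    exact ⟨hch, fun htop => ((hM (M i)).1 ⟨i, rfl⟩).1 (top_le_iff.1 (hle ⊤ htop))⟩
  · rintro ⟨hch, htop⟩
    have hsup : C.sup id ≠ ⊤ := by
      rcases C.eq_empty_or_nonempty with rfl | hne
      · exact bot_ne_top
      · exact fun h => htop (h ▸ hch.finset_sup_id_mem hne)
    obtain ⟨c, hc, hle⟩ := (eq_top_or_exists_le_coatom (C.sup id)).resolve_left hsup
    obtain ⟨i, rfl⟩ := (hM c).2 hc
    exact ⟨i, hch, fun x hx => (le_sup (f := id) hx).trans hle⟩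

end Lattice

lemma inf'_chainsBelow [CompleteLattice α] {ι : Type*} {S : Finset ι} (hS : S.Nonempty)
    (f : ι → α) : S.inf' hS (fun i => chainsBelow (f i)) = chainsBelow (⨅ i ∈ S, f i) := by
  ext C
  simp only [mem_inf', mem_chainsBelow, le_iInf₂_iff]
  obtain ⟨i, hi⟩ := hS
  exact ⟨fun h => ⟨(h i hi).1, fun x hx j hj => (h j hj).2 x hx⟩,
    fun h j _ => ⟨h.1, fun x hx => h.2 x hx j ‹_›⟩⟩

end Chains

lemma numChains_eq_card_chainsWithMax_top (G : Type*) [Group G] [Fintype (Subgroup G)] :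
    numChains G = #(chainsWithMax (⊤ : Subgroup G)) := by
  classical
  rw [numChains, Nat.card_eq_fintype_card, Fintype.card_subtype]
  congr 1
  ext C
  simp [mem_chainsWithMax]

lemma numChains_subgroup {G : Type*} [Group G] [Fintype (Subgroup G)] (K : Subgroup G) :
    numChains K = #(chainsWithMax K) := by
  let f : Subgroup K ↪o Subgroup G :=
    (Subgroup.MapSubtype.orderIso K).toOrderEmbedding.trans (OrderEmbedding.subtype _)
  have : Fintype (Subgroup K) := Fintype.ofInjective f f.injective
  have hfK : f ⊤ = K := by simp [f, ← MonoidHom.range_eq_map]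
  rw [numChains_eq_card_chainsWithMax_top, ← card_chainsWithMax_map f ⊤, hfK]
  exact fun H hH =>
    ⟨H.subgroupOf K, by simpa [f] using Subgroup.map_subgroupOf_eq_of_le (hfK ▸ hH)⟩

theorem numChains_inclusion_exclusion_general {G : Type*} [Group G] [Finite G] [Nontrivial G]
    (t : ℕ) (M : Fin t → Subgroup G)
    (hmax : ∀ H : Subgroup G, H ∈ Set.range M ↔ IsCoatom H) :
    (numChains G : ℤ) =
      2 * ∑ S ∈ Finset.univ.powerset.filter (fun S : Finset (Fin t) => S.Nonempty),
        (-1 : ℤ) ^ (S.card + 1) * numChains ↥(⨅ r ∈ S, M r) := by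
  classical
  have := Fintype.ofFinite (Subgroup G)
  rw [numChains_eq_card_chainsWithMax_top, ← card_chainsBelow_filter_notMem,
    ← biUnion_chainsBelow_eq_filter_notMem_top M hmax, inclusion_exclusion_card_biUnion,
    mul_sum, ← sum_coe_sort (univ.powerset.filter _)]
  refine sum_congr rfl fun S _ => ?_
  rw [inf'_chainsBelow, card_chainsBelow, numChains_subgroup]
  push_cast
  ring

theorem numChains_inclusion_exclusion {G : Type*} [Group G] [Finite G] [Nontrivial G]
    (t : ℕ) (M : Fin t → Subgroup G) (hinj : Function.Injective M)
    (hmax : ∀ H : Subgroup G, H ∈ Set.range M ↔ IsCoatom H) :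
    (numChains G : ℤ) =
      2 * ∑ S ∈ Finset.univ.powerset.filter (fun S : Finset (Fin t) => S.Nonempty),
        (-1 : ℤ) ^ (S.card + 1) * numChains ↥(⨅ r ∈ S, M r) :=
  numChains_inclusion_exclusion_general t M hmax
end

section
/- The number of distinct fuzzy subgroups of a finite group G, where fuzzy subgroups λ, μ : G → [0,1] are identified when (λ(a) > λ(b) ⇔ μ(a) > μ(b) for all a, b ∈ G), equals the number of chains of subgroups of G under strict inclusion whose maximal element is G. -/
/-- A fuzzy subgroup of `G`: a function `G → [0,1]` with
`f (a*b) ≥ min (f a) (f b)` and `f a⁻¹ ≥ f a`. -/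
def IsFuzzySubgroup {G : Type*} [Group G] (f : G → ℝ) : Prop :=
  (∀ a, f a ∈ Set.Icc (0 : ℝ) 1) ∧ (∀ a b, min (f a) (f b) ≤ f (a * b)) ∧ ∀ a, f a ≤ f a⁻¹

/-!
A fuzzy subgroup `f` is determined, up to the equivalence, by the preorder `f a ≤ f b` on `G`,
and this preorder is recorded by its level subgroups `{x | f a ≤ f x}`, which form a chain
ending in `G`. Conversely a chain `C` ending in `G` is the chain of levels of the fuzzy subgroup
`x ↦ #{H ∈ C | x ∈ H} / #C`: in a chain, `#{H ∈ C | a ∈ H} ≤ #{H ∈ C | b ∈ H}` holds exactly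
when every member of `C` containing `a` contains `b`.
-/

open Finset

open scoped Classical

lemma IsChain.card_filter_mem_le_iff {α S : Type*} [SetLike S α] [Preorder S] [IsConcreteLE S α]
    {C : Finset S} (hC : IsChain (· ≤ ·) (C : Set S)) {a b : α} :
    #{H ∈ C | a ∈ H} ≤ #{H ∈ C | b ∈ H} ↔ ∀ H ∈ C, a ∈ H → b ∈ H := by
  refine ⟨fun hle H hH ha => ?_, fun h => card_le_card (monotone_filter_right C h)⟩
  by_contra hb
  -- Every member of `C` containing `b` lies above `H`, hence contains `a` as well.
  have hsub : {K ∈ C | b ∈ K} ⊆ {K ∈ C | a ∈ K} := by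
    intro K hK
    rw [mem_filter] at hK ⊢
    refine ⟨hK.1, ?_⟩
    rcases hC.total hK.1 hH with hKH | hHK
    · exact absurd (SetLike.le_def.1 hKH hK.2) hb
    · exact SetLike.le_def.1 hHK ha
  have hssub : {K ∈ C | b ∈ K} ⊂ {K ∈ C | a ∈ K} :=
    (ssubset_iff_of_subset hsub).2 ⟨H, mem_filter.2 ⟨hH, ha⟩, fun h => hb (mem_filter.1 h).2⟩
  exact (card_lt_card hssub).not_ge hle

lemma Subgroup.exists_mem_forall_notMem_of_lt {G : Type*} [Group G] {C : Finset (Subgroup G)}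
    (hC : IsChain (· ≤ ·) (C : Set (Subgroup G))) (H : Subgroup G) :
    ∃ a ∈ H, ∀ K ∈ C, K < H → a ∉ K := by
  rcases {K ∈ C | K < H}.eq_empty_or_nonempty with hempty | hne
  · refine ⟨1, H.one_mem, fun K hK hKH => ?_⟩
    exact absurd (mem_filter.2 ⟨hK, hKH⟩) (hempty ▸ notMem_empty K)
  · obtain ⟨K₀, hK₀⟩ := exists_maximal hne
    have hK₀C := mem_filter.1 hK₀.prop
    obtain ⟨a, haH, haK₀⟩ := SetLike.exists_of_lt hK₀C.2
    refine ⟨a, haH, fun K hK hKH haK => haK₀ ?_⟩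
    rcases hC.total hK hK₀C.1 with hKK₀ | hK₀K
    · exact hKK₀ haK
    · exact hK₀.le_of_ge (mem_filter.2 ⟨hK, hKH⟩) hK₀K haK

namespace IsFuzzySubgroup

variable {G : Type*} [Group G] {f : G → ℝ}

lemma apply_le_apply_one (hf : IsFuzzySubgroup f) (a : G) : f a ≤ f 1 := by
  simpa [min_eq_left (hf.2.2 a)] using hf.2.1 a a⁻¹

def levelSubgroup (hf : IsFuzzySubgroup f) (a : G) : Subgroup G where
  carrier := {x | f a ≤ f x}
  one_mem' := hf.apply_le_apply_one a
  mul_mem' hx hy := (le_min hx hy).trans (hf.2.1 _ _)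
  inv_mem' hx := hx.trans (hf.2.2 _)

lemma mem_levelSubgroup (hf : IsFuzzySubgroup f) {a x : G} :
    x ∈ hf.levelSubgroup a ↔ f a ≤ f x := Iff.rfl

variable [Finite G]

noncomputable def levelChain (hf : IsFuzzySubgroup f) : Finset (Subgroup G) :=
  (Set.finite_range hf.levelSubgroup).toFinset

lemma mem_levelChain (hf : IsFuzzySubgroup f) {H : Subgroup G} :
    H ∈ hf.levelChain ↔ ∃ a, hf.levelSubgroup a = H := by
  simp [levelChain]

lemma isChain_levelChain (hf : IsFuzzySubgroup f) :
    IsChain (· ≤ ·) (hf.levelChain : Set (Subgroup G)) := by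
  rintro _ hH _ hK -
  obtain ⟨a, rfl⟩ := hf.mem_levelChain.1 hH
  obtain ⟨b, rfl⟩ := hf.mem_levelChain.1 hK
  rcases le_total (f a) (f b) with hab | hba
  · exact Or.inr fun x hx => hab.trans hx
  · exact Or.inl fun x hx => hba.trans hx

lemma top_mem_levelChain (hf : IsFuzzySubgroup f) : ⊤ ∈ hf.levelChain := by
  obtain ⟨a, ha⟩ := Finite.exists_min f
  exact hf.mem_levelChain.2 ⟨a, (Subgroup.eq_top_iff' _).2 ha⟩

lemma levelChain_congr {g : G → ℝ} (hf : IsFuzzySubgroup f) (hg : IsFuzzySubgroup g)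
    (h : ∀ a b : G, f a > f b ↔ g a > g b) : hf.levelChain = hg.levelChain := by
  have hlevel : hf.levelSubgroup = hg.levelSubgroup := by
    funext a
    ext x
    simpa only [mem_levelSubgroup, not_lt] using not_congr (h a x)
  simp only [levelChain, hlevel]

lemma forall_mem_levelChain_iff (hf : IsFuzzySubgroup f) {a b : G} :
    (∀ H ∈ hf.levelChain, a ∈ H → b ∈ H) ↔ f a ≤ f b := by
  simp only [mem_levelChain, forall_exists_index, forall_apply_eq_imp_iff, mem_levelSubgroup]
  exact ⟨fun h => h a le_rfl, fun hab c hca => hca.trans hab⟩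

end IsFuzzySubgroup

section ChainFuzzy

variable {G : Type*} [Group G] {C : Finset (Subgroup G)}

noncomputable def chainFuzzy (C : Finset (Subgroup G)) (x : G) : ℝ :=
  #{H ∈ C | x ∈ H} / #C

lemma chainFuzzy_le_iff (hC : IsChain (· ≤ ·) (C : Set (Subgroup G))) (hne : C.Nonempty)
    {a b : G} : chainFuzzy C a ≤ chainFuzzy C b ↔ ∀ H ∈ C, a ∈ H → b ∈ H := by
  rw [chainFuzzy, chainFuzzy, div_le_div_iff_of_pos_right (by exact_mod_cast hne.card_pos),
    Nat.cast_le, hC.card_filter_mem_le_iff]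

lemma isFuzzySubgroup_chainFuzzy (hC : IsChain (· ≤ ·) (C : Set (Subgroup G)))
    (hne : C.Nonempty) : IsFuzzySubgroup (chainFuzzy C) := by
  refine ⟨fun a => ⟨?_, ?_⟩, fun a b => ?_, fun a => ?_⟩
  · exact div_nonneg (Nat.cast_nonneg _) (Nat.cast_nonneg _)
  · exact div_le_one_of_le₀ (by exact_mod_cast card_filter_le _ _) (Nat.cast_nonneg _)
  · rcases le_total (chainFuzzy C a) (chainFuzzy C b) with hab | hba
    · refine (min_le_left _ _).trans ((chainFuzzy_le_iff hC hne).2 fun H _ ha => ?_)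
      exact mul_mem ha ((chainFuzzy_le_iff hC hne).1 hab H ‹_› ha)
    · refine (min_le_right _ _).trans ((chainFuzzy_le_iff hC hne).2 fun H _ hb => ?_)
      exact mul_mem ((chainFuzzy_le_iff hC hne).1 hba H ‹_› hb) hb
  · exact (chainFuzzy_le_iff hC hne).2 fun H _ ha => inv_mem ha

lemma levelSubgroup_chainFuzzy_eq (hC : IsChain (· ≤ ·) (C : Set (Subgroup G)))
    (hne : C.Nonempty) {H : Subgroup G} (hH : H ∈ C) {a : G} (ha : a ∈ H)
    (hlt : ∀ K ∈ C, K < H → a ∉ K) :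
    (isFuzzySubgroup_chainFuzzy hC hne).levelSubgroup a = H := by
  ext x
  rw [IsFuzzySubgroup.mem_levelSubgroup, chainFuzzy_le_iff hC hne]
  refine ⟨fun h => h H hH ha, fun hx K hK haK => ?_⟩
  rcases hC.total hH hK with hHK | hKH
  · exact hHK hx
  · rcases hKH.lt_or_eq with hlt' | rfl
    · exact absurd haK (hlt K hK hlt')
    · exact hx

variable [Finite G]

lemma chainFuzzy_levelChain_le_iff {f : G → ℝ} (hf : IsFuzzySubgroup f) {a b : G} :
    chainFuzzy hf.levelChain a ≤ chainFuzzy hf.levelChain b ↔ f a ≤ f b := by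
  rw [chainFuzzy_le_iff hf.isChain_levelChain ⟨⊤, hf.top_mem_levelChain⟩,
    hf.forall_mem_levelChain_iff]

lemma levelChain_chainFuzzy (hC : IsChain (· ≤ ·) (C : Set (Subgroup G))) (htop : ⊤ ∈ C) :
    (isFuzzySubgroup_chainFuzzy hC ⟨⊤, htop⟩).levelChain = C := by
  ext H
  rw [IsFuzzySubgroup.mem_levelChain]
  constructor
  · rintro ⟨a, rfl⟩
    -- The level at `a` is the least member of `C` containing `a`.
    obtain ⟨H₀, hH₀⟩ := exists_minimal (s := {K ∈ C | a ∈ K}) ⟨⊤, mem_filter.2 ⟨htop, trivial⟩⟩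
    have hH₀C := mem_filter.1 hH₀.prop
    rw [levelSubgroup_chainFuzzy_eq hC ⟨⊤, htop⟩ hH₀C.1 hH₀C.2 fun K hK hlt haK =>
      (hH₀.le_of_le (mem_filter.2 ⟨hK, haK⟩) hlt.le).not_gt hlt]
    exact hH₀C.1
  · intro hH
    obtain ⟨a, ha, hlt⟩ := Subgroup.exists_mem_forall_notMem_of_lt hC H
    exact ⟨a, levelSubgroup_chainFuzzy_eq hC ⟨⊤, htop⟩ hH ha hlt⟩

end ChainFuzzy

theorem card_fuzzy_subgroups_eq_numChains {G : Type*} [Group G] [Finite G] :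
    Nat.card (Quot (fun f g : {f : G → ℝ // IsFuzzySubgroup f} =>
      ∀ a b : G, f.1 a > f.1 b ↔ g.1 a > g.1 b)) = numChains G := by
  refine Nat.card_congr
    { toFun := Quot.lift
        (fun f => ⟨f.2.levelChain, f.2.isChain_levelChain, f.2.top_mem_levelChain⟩)
        fun f g h => Subtype.ext (f.2.levelChain_congr g.2 h)
      invFun := fun C => Quot.mk _ ⟨chainFuzzy C.1, isFuzzySubgroup_chainFuzzy C.2.1 ⟨⊤, C.2.2⟩⟩
      left_inv := Quot.ind fun f => Quot.sound fun a b => ?_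
      right_inv := fun C => Subtype.ext (levelChain_chainFuzzy C.2.1 C.2.2) }
  simp only [gt_iff_lt, ← not_le, chainFuzzy_levelChain_le_iff]
end
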